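/- Let H : E → ℝ be smooth, β a closed smooth 1-form on E, f : E → ℝ smooth, and ζ a smooth vector field with L_ζ(α_H + β) = df (a weak Noether symmetry). Let U ⊆ E be an open set on which the elementary action ρ(x) = Σⱼ pⱼ ∂H/∂pⱼ(x) − H(x) is nonzero. Then the vector field ζ̃(x) = ζ(x) + ρ(x)⁻¹ (β(x)(ζ(x)) − f(x)) · Z_H(x) satisfies, on U, L_{ζ̃} α_H = 0 and α_H(x)(ζ̃(x)) = (α_H + β)(x)(ζ(x)) − f(x); i.e., ζ̃ is a Noether symmetry with the same conserved quantity as ζ. -/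

import Mathlib

noncomputable section
open scoped ContDiff

/-- The extended phase space `E = ℝ × ℝⁿ × ℝⁿ`, with points `x = (t, q, p)`. -/
abbrev EE (n : ℕ) : Type := ℝ × (Fin n → ℝ) × (Fin n → ℝ)

/-- The Poincaré–Cartan 1-form `α_H = p dq − H dt`:
`α_H(x)(τ̂, ξ̂, η̂) = ∑ i, pᵢ ξ̂ᵢ − H(x) τ̂`. -/
def pcForm {n : ℕ} (H : EE n → ℝ) (x : EE n) : EE n →L[ℝ] ℝ :=
  (∑ i, x.2.2 i • ((ContinuousLinearMap.proj i).comp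
      ((ContinuousLinearMap.fst ℝ (Fin n → ℝ) (Fin n → ℝ)).comp
        (ContinuousLinearMap.snd ℝ ℝ ((Fin n → ℝ) × (Fin n → ℝ))))))
    - H x • ContinuousLinearMap.fst ℝ ℝ ((Fin n → ℝ) × (Fin n → ℝ))

/-- The vector field `Z_H(x) = (1, ∂H/∂p(x), −∂H/∂q(x))` of Hamilton's equations. -/
def ZH {n : ℕ} (H : EE n → ℝ) (x : EE n) : EE n :=
  (1, fun i => fderiv ℝ H x (0, 0, Pi.single i 1),
      fun i => - fderiv ℝ H x (0, Pi.single i 1, 0))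

/-- The Lie derivative of a 1-form `α` along a vector field `ζ`:
`(L_ζ α)(x)(v) = (Dα(x)(ζ(x)))(v) + α(x)(Dζ(x)(v))`. -/
def lieDeriv {n : ℕ} (ζ : EE n → EE n) (α : EE n → (EE n →L[ℝ] ℝ)) (x : EE n) :
    EE n →L[ℝ] ℝ :=
  fderiv ℝ α x (ζ x) + (α x).comp (fderiv ℝ ζ x)

/-- The exterior derivative of a 1-form:
`dα(x)(u,v) = (Dα(x)u)(v) − (Dα(x)v)(u)`. -/
def extDerivOneForm {n : ℕ} (α : EE n → (EE n →L[ℝ] ℝ)) (x u v : EE n) : ℝ :=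
  fderiv ℝ α x u v - fderiv ℝ α x v u

/-- The elementary action `ρ(x) = ∑ⱼ pⱼ ∂H/∂pⱼ(x) − H(x)`. -/
def elemAction {n : ℕ} (H : EE n → ℝ) (x : EE n) : ℝ :=
  (∑ j, x.2.2 j * fderiv ℝ H x (0, 0, Pi.single j 1)) - H x

/-!
Cartan's formula `L_ζ α = ι_ζ dα + d(α(ζ))` drives the proof. The Hamiltonian field spans
the kernel of `dα_H`, i.e. `ι_{Z_H} dα_H = 0`, so `ι_{ζ̃} dα_H = ι_ζ dα_H` at every point,
whatever the coefficient of `Z_H`. Since `α_H(Z_H) = ρ`, the coefficient `ρ⁻¹(β(ζ) − f)`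
makes `α_H(ζ̃) = α_H(ζ) + β(ζ) − f` on `U`; differentiating this identity on the open set
`U` avoids ever differentiating the coefficient. Hence on `U`
`L_{ζ̃} α_H = ι_ζ dα_H + d(α_H(ζ)) + d(β(ζ)) − df = L_ζ(α_H + β) − df = 0`,
using `L_ζ β = d(β(ζ))` for the closed form `β`.
-/

open Filter Topology

section

variable {n : ℕ}

lemma extDerivOneForm_add_smul (α : EE n → (EE n →L[ℝ] ℝ)) (x u w v : EE n) (c : ℝ) :
    extDerivOneForm α x (u + c • w) v =
      extDerivOneForm α x u v + c * extDerivOneForm α x w v := by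
  simp only [extDerivOneForm, map_add, map_smul, add_apply, smul_apply, smul_eq_mul]
  ring

lemma lieDeriv_apply_cartan {α : EE n → (EE n →L[ℝ] ℝ)} {ζ : EE n → EE n} {x : EE n}
    (hα : DifferentiableAt ℝ α x) (hζ : DifferentiableAt ℝ ζ x) (v : EE n) :
    lieDeriv ζ α x v =
      extDerivOneForm α x (ζ x) v + fderiv ℝ (fun y => α y (ζ y)) x v := by
  rw [fderiv_clm_apply hα hζ]
  simp only [lieDeriv, extDerivOneForm, add_apply, ContinuousLinearMap.comp_apply,
    ContinuousLinearMap.flip_apply]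
  ring

lemma lieDeriv_add {α β : EE n → (EE n →L[ℝ] ℝ)} {ζ : EE n → EE n} {x : EE n}
    (hα : DifferentiableAt ℝ α x) (hβ : DifferentiableAt ℝ β x) :
    lieDeriv ζ (fun y => α y + β y) x = lieDeriv ζ α x + lieDeriv ζ β x := by
  simp only [lieDeriv, fderiv_fun_add hα hβ, add_apply, ContinuousLinearMap.add_comp]
  abel

lemma lieDeriv_eq_fderiv_of_closed {β : EE n → (EE n →L[ℝ] ℝ)} {ζ : EE n → EE n}
    {x : EE n}
    (hβ : DifferentiableAt ℝ β x) (hζ : DifferentiableAt ℝ ζ x)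
    (hclosed : ∀ u v, extDerivOneForm β x u v = 0) :
    lieDeriv ζ β x = fderiv ℝ (fun y => β y (ζ y)) x := by
  refine ContinuousLinearMap.ext fun v => ?_
  rw [lieDeriv_apply_cartan hβ hζ, hclosed, zero_add]

def tCoord (n : ℕ) : EE n →L[ℝ] ℝ :=
  ContinuousLinearMap.fst ℝ ℝ ((Fin n → ℝ) × (Fin n → ℝ))

def qCoord (i : Fin n) : EE n →L[ℝ] ℝ :=
  (ContinuousLinearMap.proj i).comp
    ((ContinuousLinearMap.fst ℝ (Fin n → ℝ) (Fin n → ℝ)).comp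
      (ContinuousLinearMap.snd ℝ ℝ ((Fin n → ℝ) × (Fin n → ℝ))))

def pCoord (i : Fin n) : EE n →L[ℝ] ℝ :=
  (ContinuousLinearMap.proj i).comp
    ((ContinuousLinearMap.snd ℝ (Fin n → ℝ) (Fin n → ℝ)).comp
      (ContinuousLinearMap.snd ℝ ℝ ((Fin n → ℝ) × (Fin n → ℝ))))

lemma pcForm_apply (H : EE n → ℝ) (x v : EE n) :
    pcForm H x v = ∑ i, x.2.2 i * v.2.1 i - H x * v.1 := by
  simp [pcForm, sum_apply]

lemma pcForm_ZH (H : EE n → ℝ) (x : EE n) : pcForm H x (ZH H x) = elemAction H x := by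
  simp [pcForm_apply, ZH, elemAction]

lemma pcForm_add_smul_ZH (H : EE n → ℝ) (x w : EE n) (c : ℝ) :
    pcForm H x (w + c • ZH H x) = pcForm H x w + c * elemAction H x := by
  rw [map_add, map_smul, pcForm_ZH, smul_eq_mul]

lemma hasFDerivAt_pcForm {H : EE n → ℝ} {H' : EE n →L[ℝ] ℝ} {x : EE n}
    (hH : HasFDerivAt H H' x) :
    HasFDerivAt (pcForm H)
      (∑ i, (pCoord i).smulRight (qCoord i) - H'.smulRight (tCoord n)) x :=
  (HasFDerivAt.fun_sum fun i _ => (pCoord i).hasFDerivAt.smul_const (qCoord i)).fun_sub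
    (hH.smul_const (tCoord n))

lemma fderiv_pcForm_apply {H : EE n → ℝ} {x : EE n} (hH : DifferentiableAt ℝ H x)
    (u v : EE n) :
    fderiv ℝ (pcForm H) x u v = ∑ i, u.2.2 i * v.2.1 i - fderiv ℝ H x u * v.1 := by
  simp [(hasFDerivAt_pcForm hH.hasFDerivAt).fderiv, sum_apply, pCoord, qCoord, tCoord]

lemma apply_eq_sum_partials (L : EE n →L[ℝ] ℝ) (v : EE n) :
    L v = v.1 * L (1, 0, 0) + ∑ i, v.2.1 i * L (0, Pi.single i 1, 0)
      + ∑ i, v.2.2 i * L (0, 0, Pi.single i 1) := by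
  have hv : v = v.1 • ((1 : ℝ), (0 : Fin n → ℝ), (0 : Fin n → ℝ))
      + ∑ i, v.2.1 i • ((0 : ℝ), (Pi.single i 1 : Fin n → ℝ), (0 : Fin n → ℝ))
      + ∑ i, v.2.2 i • ((0 : ℝ), (0 : Fin n → ℝ), (Pi.single i 1 : Fin n → ℝ)) := by
    ext <;> simp [Prod.fst_sum, Prod.snd_sum, Finset.sum_apply, Pi.single_apply]
  conv_lhs => rw [hv]
  simp only [map_add, map_sum, map_smul, smul_eq_mul]

lemma extDerivOneForm_pcForm_ZH {H : EE n → ℝ} {x : EE n} (hH : DifferentiableAt ℝ H x)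
    (v : EE n) : extDerivOneForm (pcForm H) x (ZH H x) v = 0 := by
  rw [extDerivOneForm, fderiv_pcForm_apply hH, fderiv_pcForm_apply hH,
    apply_eq_sum_partials (fderiv ℝ H x) (ZH H x), apply_eq_sum_partials (fderiv ℝ H x) v]
  simp only [ZH, neg_mul, Finset.sum_neg_distrib, one_mul, mul_one]
  simp only [mul_comm]
  ring

lemma contDiff_ZH {k : WithTop ℕ∞} {H : EE n → ℝ} (hH : ContDiff ℝ (k + 1) H) :
    ContDiff ℝ k (ZH H) := by
  have hDH := hH.fderiv_right le_rfl
  exact contDiff_const.prodMk <| (contDiff_pi.2 fun i => hDH.clm_apply contDiff_const).prodMk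
    (contDiff_pi.2 fun i => (hDH.clm_apply contDiff_const).neg)

lemma contDiff_elemAction {k : WithTop ℕ∞} {H : EE n → ℝ} (hH : ContDiff ℝ (k + 1) H) :
    ContDiff ℝ k (elemAction H) :=
  (ContDiff.sum fun j _ => (pCoord j).contDiff.mul
    ((hH.fderiv_right le_rfl).clm_apply contDiff_const)).sub (hH.of_le le_self_add)

lemma lieDeriv_pcForm_eq_zero {H f : EE n → ℝ} {β : EE n → (EE n →L[ℝ] ℝ)}
    {ζ ζt : EE n → EE n} {x : EE n}
    (hH : DifferentiableAt ℝ H x) (hβ : DifferentiableAt ℝ β x)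
    (hf : DifferentiableAt ℝ f x) (hζ : DifferentiableAt ℝ ζ x) (hζt : DifferentiableAt ℝ ζt x)
    (hβclosed : ∀ u v, extDerivOneForm β x u v = 0)
    (hsym : lieDeriv ζ (fun y => pcForm H y + β y) x = fderiv ℝ f x)
    (hζtx : ∃ c : ℝ, ζt x = ζ x + c • ZH H x)
    (hconserved : (fun y => pcForm H y (ζt y)) =ᶠ[𝓝 x]
      fun y => pcForm H y (ζ y) + β y (ζ y) - f y) :
    lieDeriv ζt (pcForm H) x = 0 := by
  obtain ⟨c, hc⟩ := hζtx
  have hα : DifferentiableAt ℝ (pcForm H) x :=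
    (hasFDerivAt_pcForm hH.hasFDerivAt).differentiableAt
  have hαζ : DifferentiableAt ℝ (fun y => pcForm H y (ζ y)) x := hα.clm_apply hζ
  have hβζ : DifferentiableAt ℝ (fun y => β y (ζ y)) x := hβ.clm_apply hζ
  have hsym' : lieDeriv ζ (pcForm H) x + fderiv ℝ (fun y => β y (ζ y)) x = fderiv ℝ f x := by
    rw [← hsym, lieDeriv_add hα hβ, lieDeriv_eq_fderiv_of_closed hβ hζ hβclosed]
  have hdiff : fderiv ℝ (fun y => pcForm H y (ζt y)) x =
      fderiv ℝ (fun y => pcForm H y (ζ y)) x + fderiv ℝ (fun y => β y (ζ y)) x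
        - fderiv ℝ f x := by
    rw [hconserved.fderiv_eq, fderiv_fun_sub (hαζ.fun_add hβζ) hf, fderiv_fun_add hαζ hβζ]
  refine ContinuousLinearMap.ext fun v => ?_
  have hinterior :
      extDerivOneForm (pcForm H) x (ζt x) v = extDerivOneForm (pcForm H) x (ζ x) v := by
    rw [hc, extDerivOneForm_add_smul, extDerivOneForm_pcForm_ZH hH, mul_zero, add_zero]
  rw [lieDeriv_apply_cartan hα hζt, hinterior, hdiff, ← hsym']
  simp only [add_apply, sub_apply, zero_apply, lieDeriv_apply_cartan hα hζ]
  ring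

end

theorem weak_to_strict_noether_general {n : ℕ}
    (H f : EE n → ℝ) (β : EE n → (EE n →L[ℝ] ℝ)) (ζ : EE n → EE n)
    (hH : ContDiff ℝ ∞ H) (hβ : ContDiff ℝ ∞ β) (hf : ContDiff ℝ ∞ f)
    (hζ : ContDiff ℝ ∞ ζ)
    (hβclosed : ∀ x u v, extDerivOneForm β x u v = 0)
    (hsym : ∀ x, lieDeriv ζ (fun y => pcForm H y + β y) x = fderiv ℝ f x)
    (U : Set (EE n)) (hU : IsOpen U)
    (hρ : ∀ x ∈ U, elemAction H x ≠ 0)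
    (ζt : EE n → EE n)
    (hζt : ∀ x, ζt x = ζ x + ((elemAction H x)⁻¹ * (β x (ζ x) - f x)) • ZH H x) :
    (∀ x ∈ U, lieDeriv ζt (pcForm H) x = 0) ∧
    (∀ x ∈ U, pcForm H x (ζt x) = (pcForm H x + β x) (ζ x) - f x) := by
  have hconserved : ∀ x ∈ U, pcForm H x (ζt x) = pcForm H x (ζ x) + β x (ζ x) - f x := by
    intro x hx
    rw [hζt, pcForm_add_smul_ZH, mul_right_comm, inv_mul_cancel₀ (hρ x hx), one_mul]
    ring
  refine ⟨fun x hx => ?_, fun x hx => by rw [hconserved x hx, add_apply]⟩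
  have hH' : ContDiff ℝ (∞ + 1) H := by simpa using hH
  have hζd : Differentiable ℝ ζ := hζ.differentiable (by simp)
  have hβd : Differentiable ℝ β := hβ.differentiable (by simp)
  have hfd : Differentiable ℝ f := hf.differentiable (by simp)
  have hρd : DifferentiableAt ℝ (elemAction H) x :=
    (contDiff_elemAction hH').differentiable (by simp) x
  have hZd : DifferentiableAt ℝ (ZH H) x := (contDiff_ZH hH').differentiable (by simp) x
  have hζtd : DifferentiableAt ℝ ζt x := by
    rw [funext hζt]
    exact (hζd x).add
      (((hρd.inv (hρ x hx)).mul (((hβd x).clm_apply (hζd x)).sub (hfd x))).smul hZd)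
  exact lieDeriv_pcForm_eq_zero (hH.differentiable (by simp) x) (hβd x) (hfd x) (hζd x) hζtd
    (hβclosed x) (hsym x) ⟨_, hζt x⟩ (eventually_of_mem (hU.mem_nhds hx) hconserved)

/-- if `ζ` is a weak Noether symmetry (`L_ζ(α_H + β) = df`, `β` closed)
and `ρ ≠ 0` on an open set `U`, then
`ζ̃ = ζ + ρ⁻¹(β(ζ) − f) • Z_H` is a Noether symmetry on `U` (`L_{ζ̃} α_H = 0`) with the
same conserved quantity: `α_H(ζ̃) = (α_H + β)(ζ) − f`. -/
theorem weak_to_strict_noether {n : ℕ} (hn : 1 ≤ n)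
    (H f : EE n → ℝ) (β : EE n → (EE n →L[ℝ] ℝ)) (ζ : EE n → EE n)
    (hH : ContDiff ℝ ∞ H) (hβ : ContDiff ℝ ∞ β) (hf : ContDiff ℝ ∞ f)
    (hζ : ContDiff ℝ ∞ ζ)
    (hβclosed : ∀ x u v, extDerivOneForm β x u v = 0)
    (hsym : ∀ x, lieDeriv ζ (fun y => pcForm H y + β y) x = fderiv ℝ f x)
    (U : Set (EE n)) (hU : IsOpen U)
    (hρ : ∀ x ∈ U, elemAction H x ≠ 0)
    (ζt : EE n → EE n)
    (hζt : ∀ x, ζt x = ζ x + ((elemAction H x)⁻¹ * (β x (ζ x) - f x)) • ZH H x) :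
    (∀ x ∈ U, lieDeriv ζt (pcForm H) x = 0) ∧
    (∀ x ∈ U, pcForm H x (ζt x) = (pcForm H x + β x) (ζ x) - f x) :=
  weak_to_strict_noether_general H f β ζ hH hβ hf hζ hβclosed hsym U hU hρ ζt hζt
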